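/- arXiv:1202.6611 — 3 statements merged into one kernel-verified Lean document; each statement's English description precedes it below -/
import Mathlib

section
/- (Uniform approximate identity.) Let θ be a set, f ∈ L¹(ℝ,ℂ), and for each ϑ ∈ θ, n ∈ ℕ let f_{ϑ,n}, δ_{ϑ,n} ∈ L¹(ℝ,ℂ). Assume: (a) sup_ϑ ‖f_{ϑ,n} − f‖_{L¹} → 0; (b) there exists c > 0 with ‖δ_{ϑ,n}‖_{L¹} ≤ c for all n, ϑ; (c) ∫_ℝ δ_{ϑ,n}(y) dy = c_ϑ for all n, ϑ, for constants c_ϑ ∈ ℂ; (d) for every neighborhood V of 0, sup_ϑ ∫_{V^c} |δ_{ϑ,n}(y)| dy → 0 as n → ∞. Then sup_ϑ ‖δ_{ϑ,n} * f_{ϑ,n} − c_ϑ f‖_{L¹(ℝ,ℂ)} → 0 as n → ∞. -/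
/-! The error splits as `(δ ∗ f - c f) + δ ∗ (fₙ - f)`. Young's inequality bounds the
second term by `‖δ‖₁ ‖fₙ - f‖₁`. The first is `∫ δ(y) (f(· - y) - f) dy`, so Minkowski's
integral inequality bounds it by `∫ |δ(y)| ω(y) dy` with `ω(y) = ‖f(· - y) - f‖₁`. By
continuity of translation in `L¹`, `ω` is small on a neighbourhood `V` of `0`, and
`ω ≤ 2 ‖f‖₁` on `Vᶜ`, where the mass of `δ` is uniformly small. -/

open MeasureTheory Filter Topology

theorem integral_norm_add_le {α E : Type*} [MeasurableSpace α] {μ : Measure α}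
    [NormedAddCommGroup E] {u v : α → E} (hu : Integrable u μ) (hv : Integrable v μ) :
    ∫ x, ‖u x + v x‖ ∂μ ≤ ∫ x, ‖u x‖ ∂μ + ∫ x, ‖v x‖ ∂μ := by
  rw [← integral_add hu.norm hv.norm]
  exact integral_mono_of_nonneg (.of_forall fun _ => norm_nonneg _) (hu.norm.add hv.norm)
    (.of_forall fun _ => norm_add_le _ _)

theorem integral_norm_integral_le_integral_integral_norm {α β E : Type*} [MeasurableSpace α]
    [MeasurableSpace β] {μ : Measure α} {ν : Measure β} [SFinite μ] [SFinite ν]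
    [NormedAddCommGroup E] [NormedSpace ℝ E] {F : α → β → E}
    (hF : Integrable (Function.uncurry F) (μ.prod ν)) :
    ∫ x, ‖∫ y, F x y ∂ν‖ ∂μ ≤ ∫ y, ∫ x, ‖F x y‖ ∂μ ∂ν :=
  calc ∫ x, ‖∫ y, F x y ∂ν‖ ∂μ ≤ ∫ x, ∫ y, ‖F x y‖ ∂ν ∂μ :=
        integral_mono_of_nonneg (.of_forall fun _ => norm_nonneg _) hF.integral_norm_prod_left
          (.of_forall fun _ => norm_integral_le_integral_norm _)
    _ = ∫ y, ∫ x, ‖F x y‖ ∂μ ∂ν := integral_integral_swap hF.norm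

theorem integral_mul_le_of_le_on {α : Type*} [MeasurableSpace α] {μ : Measure α}
    {k w : α → ℝ} {V : Set α} {η B : ℝ} (hk : Integrable k μ)
    (hkw : Integrable (fun y => k y * w y) μ) (hk0 : ∀ y, 0 ≤ k y) (hV : MeasurableSet V)
    (hwV : ∀ y ∈ V, w y ≤ η) (hw : ∀ y, w y ≤ B) (hη : 0 ≤ η) :
    ∫ y, k y * w y ∂μ ≤ η * ∫ y, k y ∂μ + B * ∫ y in Vᶜ, k y ∂μ := by
  rw [← integral_add_compl hV hkw]
  gcongr
  · calc ∫ y in V, k y * w y ∂μ ≤ ∫ y in V, k y * η ∂μ :=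
          setIntegral_mono_on hkw.integrableOn (hk.mul_const η).integrableOn hV
            fun y hy => mul_le_mul_of_nonneg_left (hwV y hy) (hk0 y)
      _ = η * ∫ y in V, k y ∂μ := by rw [integral_mul_const, mul_comm]
      _ ≤ η * ∫ y, k y ∂μ :=
          mul_le_mul_of_nonneg_left (setIntegral_le_integral hk (.of_forall hk0)) hη
  · calc ∫ y in Vᶜ, k y * w y ∂μ ≤ ∫ y in Vᶜ, k y * B ∂μ :=
          setIntegral_mono_on hkw.integrableOn (hk.mul_const B).integrableOn hV.compl
            fun y _ => mul_le_mul_of_nonneg_left (hw y) (hk0 y)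
      _ = B * ∫ y in Vᶜ, k y ∂μ := by rw [integral_mul_const, mul_comm]

theorem tendsto_integral_norm_comp_add_sub {G E : Type*} [AddGroup G] [TopologicalSpace G]
    [IsTopologicalAddGroup G] [MeasurableSpace G] [BorelSpace G] [NormedAddCommGroup E]
    {μ : Measure G} [IsLocallyFiniteMeasure μ] [μ.InnerRegularCompactLTTop]
    [μ.IsAddLeftInvariant] {f : G → E} (hf : Integrable f μ) :
    Tendsto (fun c => ∫ x, ‖f (c + x) - f x‖ ∂μ) (𝓝 0) (𝓝 0) := by
  have : Fact ((1 : ENNReal) ≠ ⊤) := ⟨ENNReal.one_ne_top⟩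
  have hcont : Continuous fun c : G => DomAddAct.mk c +ᵥ hf.toL1 f :=
    DomAddAct.continuous_mk.vadd continuous_const
  have h := ((hcont.tendsto 0).sub_const (hf.toL1 f)).norm
  rw [DomAddAct.mk_zero, zero_vadd, sub_self, norm_zero] at h
  refine h.congr fun c => ?_
  rw [L1.norm_eq_integral_norm]
  refine integral_congr_ae ?_
  filter_upwards [Lp.coeFn_sub (DomAddAct.mk c +ᵥ hf.toL1 f) (hf.toL1 f),
    DomAddAct.vadd_Lp_ae_eq (DomAddAct.mk c) (hf.toL1 f), hf.coeFn_toL1,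
    (measurePreserving_add_left μ c).quasiMeasurePreserving.ae_eq_comp hf.coeFn_toL1]
    with x h1 h2 h3 h4
  rw [h1, Pi.sub_apply, h2, h3, Equiv.symm_apply_apply, vadd_eq_add]
  exact congrArg (‖· - f x‖) h4

theorem tendsto_integral_norm_comp_sub_sub {G E : Type*} [AddCommGroup G] [TopologicalSpace G]
    [IsTopologicalAddGroup G] [MeasurableSpace G] [BorelSpace G] [NormedAddCommGroup E]
    {μ : Measure G} [IsLocallyFiniteMeasure μ] [μ.InnerRegularCompactLTTop]
    [μ.IsAddLeftInvariant] {f : G → E} (hf : Integrable f μ) :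
    Tendsto (fun y => ∫ x, ‖f (x - y) - f x‖ ∂μ) (𝓝 0) (𝓝 0) := by
  have h := (tendsto_integral_norm_comp_add_sub hf).comp
    (neg_zero (G := G) ▸ tendsto_neg 0)
  simpa only [Function.comp_def, neg_add_eq_sub] using h

theorem integral_norm_comp_sub_sub_le {G E : Type*} [AddGroup G] [MeasurableSpace G]
    [MeasurableAdd G] {μ : Measure G} [μ.IsAddRightInvariant] [NormedAddCommGroup E]
    {f : G → E} (hf : Integrable f μ) (y : G) :
    ∫ x, ‖f (x - y) - f x‖ ∂μ ≤ 2 * ∫ x, ‖f x‖ ∂μ :=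
  calc ∫ x, ‖f (x - y) - f x‖ ∂μ ≤ ∫ x, ‖f (x - y)‖ ∂μ + ∫ x, ‖-f x‖ ∂μ := by
        simpa only [sub_eq_add_neg, Pi.neg_apply] using
          integral_norm_add_le (hf.comp_sub_right y) hf.neg
    _ = 2 * ∫ x, ‖f x‖ ∂μ := by
        simp only [norm_neg, integral_sub_right_eq_self (fun x => ‖f x‖) y]; ring

section Convolution

variable {G 𝕜 : Type*} [AddCommGroup G] [MeasurableSpace G] [MeasurableAdd₂ G]
  [MeasurableNeg G] {μ : Measure G} [SFinite μ] [μ.IsAddLeftInvariant] [RCLike 𝕜]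

theorem integrable_prod_comp_sub_mul {d g : G → 𝕜} (hd : Integrable d μ)
    (hg : Integrable g μ) :
    Integrable (fun p : G × G => d (p.1 - p.2) * g p.2) (μ.prod μ) :=
  (hg.convolution_integrand (ContinuousLinearMap.mul ℝ 𝕜) hd).congr
    (.of_forall fun p => by simp only [ContinuousLinearMap.mul_apply', mul_comm])

theorem integral_norm_integral_comp_sub_mul_le {d g : G → 𝕜} (hd : Integrable d μ)
    (hg : Integrable g μ) :
    ∫ x, ‖∫ y, d (x - y) * g y ∂μ‖ ∂μ ≤ (∫ x, ‖d x‖ ∂μ) * ∫ y, ‖g y‖ ∂μ :=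
  calc ∫ x, ‖∫ y, d (x - y) * g y ∂μ‖ ∂μ ≤ ∫ y, ∫ x, ‖d (x - y) * g y‖ ∂μ ∂μ :=
        integral_norm_integral_le_integral_integral_norm (integrable_prod_comp_sub_mul hd hg)
    _ = (∫ x, ‖d x‖ ∂μ) * ∫ y, ‖g y‖ ∂μ := by
        simp only [norm_mul, integral_mul_const, integral_sub_right_eq_self (fun x => ‖d x‖),
          integral_const_mul]

theorem integrable_prod_mul_comp_sub_sub {d f : G → 𝕜} (hd : Integrable d μ)
    (hf : Integrable f μ) :
    Integrable (fun p : G × G => d p.2 * (f (p.1 - p.2) - f p.1)) (μ.prod μ) :=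
  ((hd.convolution_integrand (ContinuousLinearMap.mul ℝ 𝕜) hf).sub
    ((hf.mul_prod hd).congr (.of_forall fun _ => mul_comm _ _))).congr
    (.of_forall fun _ => by
      simp only [ContinuousLinearMap.mul_apply', Pi.sub_apply, mul_sub])

theorem integrable_norm_mul_integral_norm_comp_sub_sub {d f : G → 𝕜} (hd : Integrable d μ)
    (hf : Integrable f μ) :
    Integrable (fun y => ‖d y‖ * ∫ x, ‖f (x - y) - f x‖ ∂μ) μ :=
  (integrable_prod_mul_comp_sub_sub hd hf).integral_norm_prod_right.congr
    (.of_forall fun y => by simp only [norm_mul, integral_const_mul])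

theorem integral_norm_integral_comp_sub_mul_sub_le [μ.IsNegInvariant] {d f : G → 𝕜}
    (hd : Integrable d μ) (hf : Integrable f μ) :
    ∫ x, ‖∫ y, d (x - y) * f y ∂μ - (∫ y, d y ∂μ) * f x‖ ∂μ ≤
      ∫ y, ‖d y‖ * ∫ x, ‖f (x - y) - f x‖ ∂μ ∂μ := by
  have hsection : ∀ᵐ x ∂μ, ∫ y, d (x - y) * f y ∂μ - (∫ y, d y ∂μ) * f x =
      ∫ y, d y * (f (x - y) - f x) ∂μ := by
    filter_upwards [(hd.convolution_integrand (ContinuousLinearMap.mul ℝ 𝕜) hf).prod_right_ae]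
      with x hx
    have hswap : ∫ y, d (x - y) * f y ∂μ = ∫ y, d y * f (x - y) ∂μ := by
      simpa only [sub_sub_cancel] using
        integral_sub_left_eq_self (fun y => d y * f (x - y)) μ x
    have hx' : Integrable (fun y => d y * f (x - y)) μ := hx
    rw [hswap, ← integral_mul_const, ← integral_sub hx' (hd.mul_const _)]
    simp only [mul_sub]
  calc ∫ x, ‖∫ y, d (x - y) * f y ∂μ - (∫ y, d y ∂μ) * f x‖ ∂μ
        = ∫ x, ‖∫ y, d y * (f (x - y) - f x) ∂μ‖ ∂μ :=
          integral_congr_ae (hsection.mono fun _ hx => congrArg norm hx)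
    _ ≤ ∫ y, ∫ x, ‖d y * (f (x - y) - f x)‖ ∂μ ∂μ :=
          integral_norm_integral_le_integral_integral_norm
            (integrable_prod_mul_comp_sub_sub hd hf)
    _ = ∫ y, ‖d y‖ * ∫ x, ‖f (x - y) - f x‖ ∂μ ∂μ := by
          simp only [norm_mul, integral_const_mul]

theorem integral_norm_integral_comp_sub_mul_sub_le_of_le_on [μ.IsNegInvariant]
    {d F f : G → 𝕜} (hd : Integrable d μ) (hF : Integrable F μ) (hf : Integrable f μ) {V : Set G}
    (hV : MeasurableSet V) {η : ℝ} (hη : 0 ≤ η)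
    (hfV : ∀ y ∈ V, ∫ x, ‖f (x - y) - f x‖ ∂μ ≤ η) :
    ∫ x, ‖∫ y, d (x - y) * F y ∂μ - (∫ y, d y ∂μ) * f x‖ ∂μ ≤
      η * ∫ y, ‖d y‖ ∂μ + 2 * (∫ x, ‖f x‖ ∂μ) * (∫ y in Vᶜ, ‖d y‖ ∂μ) +
        (∫ y, ‖d y‖ ∂μ) * ∫ y, ‖F y - f y‖ ∂μ := by
  have hsplit : ∀ᵐ x ∂μ, ∫ y, d (x - y) * F y ∂μ - (∫ y, d y ∂μ) * f x =
      (∫ y, d (x - y) * f y ∂μ - (∫ y, d y ∂μ) * f x) +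
        ∫ y, d (x - y) * (F y - f y) ∂μ := by
    filter_upwards [(integrable_prod_comp_sub_mul hd hF).prod_right_ae,
      (integrable_prod_comp_sub_mul hd hf).prod_right_ae] with x hxF hxf
    simp only [mul_sub]
    rw [integral_sub hxF hxf]
    ring
  have hmain : Integrable (fun x => ∫ y, d (x - y) * f y ∂μ - (∫ y, d y ∂μ) * f x) μ :=
    (integrable_prod_comp_sub_mul hd hf).integral_prod_left.sub (hf.const_mul _)
  have hrest : Integrable (fun x => ∫ y, d (x - y) * (F y - f y) ∂μ) μ :=
    (integrable_prod_comp_sub_mul hd (hF.sub hf)).integral_prod_left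
  calc ∫ x, ‖∫ y, d (x - y) * F y ∂μ - (∫ y, d y ∂μ) * f x‖ ∂μ
        = ∫ x, ‖(∫ y, d (x - y) * f y ∂μ - (∫ y, d y ∂μ) * f x) +
            ∫ y, d (x - y) * (F y - f y) ∂μ‖ ∂μ :=
          integral_congr_ae (hsplit.mono fun _ hx => congrArg norm hx)
    _ ≤ ∫ x, ‖∫ y, d (x - y) * f y ∂μ - (∫ y, d y ∂μ) * f x‖ ∂μ +
          ∫ x, ‖∫ y, d (x - y) * (F y - f y) ∂μ‖ ∂μ := integral_norm_add_le hmain hrest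
    _ ≤ _ := by
          gcongr
          · exact (integral_norm_integral_comp_sub_mul_sub_le hd hf).trans
              (integral_mul_le_of_le_on hd.norm
                (integrable_norm_mul_integral_norm_comp_sub_sub hd hf) (fun _ => norm_nonneg _)
                hV hfV (integral_norm_comp_sub_sub_le hf) hη)
          · exact integral_norm_integral_comp_sub_mul_le hd (hF.sub hf)

end Convolution

theorem uniform_approximate_identity {θ : Type*}
    (f : ℝ → ℂ) (fn : θ → ℕ → ℝ → ℂ) (dn : θ → ℕ → ℝ → ℂ) (cϑ : θ → ℂ)
    (hf : Integrable f)
    (hfn : ∀ ϑ n, Integrable (fn ϑ n)) (hdn : ∀ ϑ n, Integrable (dn ϑ n))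
    (hfconv : ∀ ε > (0:ℝ), ∀ᶠ n in atTop, ∀ ϑ, (∫ x, ‖fn ϑ n x - f x‖) ≤ ε)
    (hc : ∃ c > (0:ℝ), ∀ ϑ n, (∫ y, ‖dn ϑ n y‖) ≤ c)
    (hnorm : ∀ ϑ n, (∫ y, dn ϑ n y) = cϑ ϑ)
    (hmass : ∀ V ∈ nhds (0:ℝ), ∀ ε > (0:ℝ), ∀ᶠ n in atTop, ∀ ϑ,
      (∫ y in Vᶜ, ‖dn ϑ n y‖) ≤ ε) :
    ∀ ε > (0:ℝ), ∀ᶠ n in atTop, ∀ ϑ,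
      (∫ x, ‖(∫ y, dn ϑ n (x - y) * fn ϑ n y) - cϑ ϑ * f x‖) ≤ ε := by
  obtain ⟨c, hc0, hdc⟩ := hc
  intro ε hε
  set M := ∫ x, ‖f x‖
  have hM : 0 ≤ M := integral_nonneg fun _ => norm_nonneg _
  obtain ⟨V, hVf, hVopen, hV0⟩ := eventually_nhds_iff.1 <|
    (tendsto_order.1 (tendsto_integral_norm_comp_sub_sub hf)).2 (ε / (3 * c)) (by positivity)
  filter_upwards [hfconv (ε / (3 * c)) (by positivity),
    hmass V (hVopen.mem_nhds hV0) (ε / (3 * (2 * M + 1))) (by positivity)]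
    with n hfn_close hdn_far ϑ
  specialize hfn_close ϑ
  specialize hdn_far ϑ
  have hd := hdc ϑ n
  have hest := integral_norm_integral_comp_sub_mul_sub_le_of_le_on (hdn ϑ n) (hfn ϑ n) hf
    hVopen.measurableSet (by positivity) fun y hy => (hVf y hy).le
  rw [hnorm] at hest
  have h₁ : ε / (3 * c) * ∫ y, ‖dn ϑ n y‖ ≤ ε / 3 := by
    calc _ ≤ ε / (3 * c) * c := by gcongr
      _ = ε / 3 := by field_simp
  have h₂ : 2 * M * ∫ y in Vᶜ, ‖dn ϑ n y‖ ≤ ε / 3 := by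
    calc _ ≤ (2 * M + 1) * (ε / (3 * (2 * M + 1))) := by gcongr ?_ * ?_; linarith
      _ = ε / 3 := by field_simp
  have h₃ : (∫ y, ‖dn ϑ n y‖) * ∫ y, ‖fn ϑ n y - f y‖ ≤ ε / 3 := by
    calc _ ≤ c * (ε / (3 * c)) := by gcongr
      _ = ε / 3 := by field_simp
  linarith
end

section
/- (Generalized Slutsky lemma for uniform convergence.) Let θ be a set and X_{ϑ,n}, Y_{ϑ,n} (ϑ ∈ θ, n ∈ ℕ) and X be ℝ^d-valued random vectors, Z_{ϑ,n} real random variables. Suppose: (i) sup_{ϑ} sup_B |P(X_{ϑ,n} ∈ B) − P(X ∈ B)| → 0 where the inner supremum is over all Borel sets B (uniform convergence in total variation); (ii) for every δ > 0, sup_ϑ P(|Y_{ϑ,n}| ≥ δ) → 0; (iii) for every δ > 0, sup_ϑ P(|Z_{ϑ,n} − 1| ≥ δ) → 0. Then for every Borel set B with P(X ∈ ∂B) = 0, sup_ϑ |P(Z_{ϑ,n} X_{ϑ,n} + Y_{ϑ,n} ∈ B) − P(X ∈ B)| → 0 as n → ∞. -/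
/-!
Choose `M` and `η` so that `P₀ (‖X₀‖ > M)` and `P₀ (X₀ ∈ cthickening η ∂B)` are small (tightness,
and `P₀ (X₀ ∈ ∂B) = 0`). Outside the events `‖Y‖ ≥ η / 2`, `|Z - 1| ≥ η / (2M)`, `‖X‖ > M` and
`X ∈ cthickening η ∂B`, the point `Z • X + Y` lies in the ball of radius `η` around `X`, a connected
set missing `∂B`, so `Z • X + Y ∈ B ↔ X ∈ B`. Convergence in total variation transfers the
smallness of the two events about `X` from `X₀` to `X ϑ n` uniformly in `ϑ`, and compares
`P (X ∈ B)` with `P₀ (X₀ ∈ B)`.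
-/

open MeasureTheory Filter Metric Set Topology
open scoped symmDiff

lemma abs_measureReal_sub_le_of_symmDiff_subset {α : Type*} [MeasurableSpace α] {μ : Measure α}
    [IsFiniteMeasure μ] {s t u : Set α} (h : s ∆ t ⊆ u) :
    |μ.real s - μ.real t| ≤ μ.real u := by
  have key : ∀ {a b : Set α}, a \ b ⊆ u → μ.real a ≤ μ.real b + μ.real u := fun hab =>
    (measureReal_mono (sdiff_subset_iff.1 hab)).trans (measureReal_union_le _ _)
  rw [abs_sub_le_iff]
  constructor
  · linarith [key (le_sup_left.trans h)]
  · linarith [key (le_sup_right.trans h)]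

lemma exists_pos_measureReal_norm_gt_lt {E : Type*} [NormedAddCommGroup E] [MeasurableSpace E]
    [OpensMeasurableSpace E] (μ : Measure E) [IsFiniteMeasure μ] {ε : ℝ} (hε : 0 < ε) :
    ∃ M > 0, μ.real {x | M < ‖x‖} < ε := by
  have hempty : ⋂ r : ℝ, {x : E | r < ‖x‖} = ∅ :=
    iInter_eq_empty_iff.2 fun x => ⟨‖x‖, lt_irrefl ‖x‖⟩
  have htail : Tendsto (fun r : ℝ => μ.real {x | r < ‖x‖}) atTop (𝓝 0) := by
    have h := tendsto_measure_iInter_atTop (μ := μ) (s := fun r : ℝ => {x : E | r < ‖x‖})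
      (fun r => (measurableSet_lt measurable_const measurable_norm).nullMeasurableSet)
      (fun r r' hrr' x (hx : r' < ‖x‖) => hrr'.trans_lt hx) ⟨0, measure_ne_top μ _⟩
    rw [hempty, measure_empty] at h
    exact (ENNReal.tendsto_toReal ENNReal.zero_ne_top).comp h
  exact ((htail.eventually (gt_mem_nhds hε)).and (eventually_gt_atTop 0)).exists.imp
    fun M hM => ⟨hM.2, hM.1⟩

lemma exists_pos_measureReal_cthickening_lt {E : Type*} [PseudoMetricSpace E] [MeasurableSpace E]
    [OpensMeasurableSpace E] (μ : Measure E) [IsFiniteMeasure μ] {F : Set E} (hF : IsClosed F)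
    (hF₀ : μ F = 0) {ε : ℝ} (hε : 0 < ε) : ∃ η > 0, μ.real (cthickening η F) < ε := by
  have h := tendsto_measure_cthickening_of_isClosed ⟨1, one_pos, measure_ne_top μ _⟩ hF
  rw [hF₀] at h
  have hsmall := ((ENNReal.tendsto_toReal ENNReal.zero_ne_top).comp h).eventually (gt_mem_nhds hε)
  have hsmall' := hsmall.filter_mono (nhdsWithin_le_nhds (s := Ioi 0))
  exact (hsmall'.and eventually_mem_nhdsWithin).exists.imp fun η hη => ⟨hη.2, hη.1⟩

lemma IsPreconnected.mem_iff_mem_of_disjoint_frontier {X : Type*} [TopologicalSpace X]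
    {s B : Set X} (hs : IsPreconnected s) (hsB : Disjoint s (frontier B)) {x y : X}
    (hx : x ∈ s) (hy : y ∈ s) : x ∈ B ↔ y ∈ B := by
  have hcover : s ⊆ interior B ∪ (closure B)ᶜ := fun z hz => by
    by_contra h
    simp only [mem_union, mem_compl_iff, not_or, not_not] at h
    exact hsB.notMem_of_mem_left hz ⟨h.2, h.1⟩
  rcases hs.subset_or_subset isOpen_interior isClosed_closure.isOpen_compl
      (disjoint_compl_right.mono_left interior_subset_closure) hcover with h | h
  · exact iff_of_true (interior_subset (h hx)) (interior_subset (h hy))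
  · exact iff_of_false (fun hxB => h hx (subset_closure hxB)) (fun hyB => h hy (subset_closure hyB))

section Slutsky

variable {E : Type*} [NormedAddCommGroup E] [NormedSpace ℝ E]

lemma mem_iff_mem_of_dist_lt_of_notMem_cthickening_frontier {B : Set E} {x w : E} {η : ℝ}
    (hx : x ∉ cthickening η (frontier B)) (hw : dist w x < η) : w ∈ B ↔ x ∈ B := by
  have hdisj : Disjoint (ball x η) (frontier B) := disjoint_left.2 fun y hy hyB =>
    hx (mem_cthickening_of_dist_le x y η _ hyB (mem_ball'.1 hy).le)
  exact (convex_ball x η).isPreconnected.mem_iff_mem_of_disjoint_frontier hdisj hw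
    (mem_ball_self (dist_nonneg.trans_lt hw))

lemma dist_smul_add_self_lt {x y : E} {z M δ η : ℝ} (hx : ‖x‖ ≤ M) (hz : |z - 1| < δ)
    (hy : ‖y‖ < η / 2) (hδM : δ * M ≤ η / 2) : dist (z • x + y) x < η := by
  calc dist (z • x + y) x = ‖(z - 1) • x + y‖ := by
        rw [dist_eq_norm, sub_smul, one_smul, add_sub_right_comm]
    _ ≤ |z - 1| * ‖x‖ + ‖y‖ := by
        rw [← Real.norm_eq_abs, ← norm_smul]; exact norm_add_le _ _
    _ < δ * M + η / 2 :=
        add_lt_add_of_le_of_lt (mul_le_mul hz.le hx (norm_nonneg x) ((abs_nonneg _).trans hz.le)) hy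
    _ ≤ η := by linarith

variable {Ω : Type*}

lemma preimage_smul_add_symmDiff_subset (X Y : Ω → E) (Z : Ω → ℝ) (B : Set E) {M δ η : ℝ}
    (hδM : δ * M ≤ η / 2) :
    ((fun ω => Z ω • X ω + Y ω) ⁻¹' B) ∆ (X ⁻¹' B) ⊆
      {ω | η / 2 ≤ ‖Y ω‖} ∪ {ω | δ ≤ |Z ω - 1|} ∪ X ⁻¹' {x | M < ‖x‖} ∪
        X ⁻¹' cthickening η (frontier B) := by
  intro ω hω
  by_contra hbad
  simp only [mem_union, mem_ofPred_eq, mem_preimage, not_or, not_le, not_lt] at hbad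
  obtain ⟨⟨⟨hY, hZ⟩, hX⟩, hT⟩ := hbad
  have hiff := mem_iff_mem_of_dist_lt_of_notMem_cthickening_frontier hT
    (dist_smul_add_self_lt hX hZ hY hδM)
  rw [mem_symmDiff, mem_preimage, mem_preimage, hiff] at hω
  tauto

lemma abs_measureReal_smul_add_preimage_sub_le [MeasurableSpace Ω] (μ : Measure Ω)
    [IsFiniteMeasure μ] (X Y : Ω → E) (Z : Ω → ℝ) (B : Set E) {M δ η : ℝ}
    (hδM : δ * M ≤ η / 2) :
    |μ.real ((fun ω => Z ω • X ω + Y ω) ⁻¹' B) - μ.real (X ⁻¹' B)| ≤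
      μ.real {ω | η / 2 ≤ ‖Y ω‖} + μ.real {ω | δ ≤ |Z ω - 1|} + μ.real (X ⁻¹' {x | M < ‖x‖}) +
        μ.real (X ⁻¹' cthickening η (frontier B)) := by
  refine (abs_measureReal_sub_le_of_symmDiff_subset
    (preimage_smul_add_symmDiff_subset X Y Z B hδM)).trans ?_
  refine (measureReal_union_le _ _).trans (add_le_add_left ?_ _)
  refine (measureReal_union_le _ _).trans (add_le_add_left ?_ _)
  exact measureReal_union_le _ _

end Slutsky

theorem uniform_slutsky_general {θ : Type*} {d : ℕ}
    (Ω : θ → ℕ → Type*) [∀ ϑ n, MeasurableSpace (Ω ϑ n)]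
    (P : ∀ ϑ n, Measure (Ω ϑ n)) [∀ ϑ n, IsProbabilityMeasure (P ϑ n)]
    (Ω₀ : Type*) [MeasurableSpace Ω₀] (P₀ : Measure Ω₀) [IsProbabilityMeasure P₀]
    (X : ∀ ϑ n, Ω ϑ n → EuclideanSpace ℝ (Fin d))
    (Y : ∀ ϑ n, Ω ϑ n → EuclideanSpace ℝ (Fin d))
    (Z : ∀ ϑ n, Ω ϑ n → ℝ)
    (X₀ : Ω₀ → EuclideanSpace ℝ (Fin d))
    (hX₀ : Measurable X₀)
    -- (i) uniform convergence in total variation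
    (hTV : ∀ ε > (0:ℝ), ∀ᶠ n in atTop, ∀ ϑ, ∀ B : Set (EuclideanSpace ℝ (Fin d)),
      MeasurableSet B →
        |(P ϑ n (X ϑ n ⁻¹' B)).toReal - (P₀ (X₀ ⁻¹' B)).toReal| ≤ ε)
    -- (ii) Y converges to 0 uniformly in probability
    (hYconv : ∀ δ > (0:ℝ), ∀ ε > (0:ℝ), ∀ᶠ n in atTop, ∀ ϑ,
      (P ϑ n {ω | δ ≤ ‖Y ϑ n ω‖}).toReal ≤ ε)
    -- (iii) Z converges to 1 uniformly in probability
    (hZconv : ∀ δ > (0:ℝ), ∀ ε > (0:ℝ), ∀ᶠ n in atTop, ∀ ϑ,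
      (P ϑ n {ω | δ ≤ |Z ϑ n ω - 1|}).toReal ≤ ε) :
    ∀ B : Set (EuclideanSpace ℝ (Fin d)), MeasurableSet B →
      P₀ (X₀ ⁻¹' frontier B) = 0 →
      ∀ ε > (0:ℝ), ∀ᶠ n in atTop, ∀ ϑ,
        |(P ϑ n ((fun ω => Z ϑ n ω • X ϑ n ω + Y ϑ n ω) ⁻¹' B)).toReal
          - (P₀ (X₀ ⁻¹' B)).toReal| ≤ ε := by
  intro B hB hB₀ ε hε
  -- one `ε / 7` each for `Y`, `Z` and `B`, two each for `‖X‖ > M` and the thickening of `∂B`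
  have hε7 : 0 < ε / 7 := by positivity
  obtain ⟨M, hM, htail⟩ := exists_pos_measureReal_norm_gt_lt (P₀.map X₀) hε7
  obtain ⟨η, hη, hthick⟩ := exists_pos_measureReal_cthickening_lt (P₀.map X₀) isClosed_frontier
    (by rwa [Measure.map_apply hX₀ isClosed_frontier.measurableSet]) hε7
  rw [map_measureReal_apply hX₀ (measurableSet_lt measurable_const measurable_norm)] at htail
  rw [map_measureReal_apply hX₀ isClosed_cthickening.measurableSet] at hthick
  have hδM : η / (2 * M) * M ≤ η / 2 := (by field_simp : η / (2 * M) * M = η / 2).le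
  filter_upwards [hTV (ε / 7) hε7, hYconv (η / 2) (by positivity) (ε / 7) hε7,
    hZconv (η / (2 * M)) (by positivity) (ε / 7) hε7] with n hXn hYn hZn ϑ
  have hXtail := hXn ϑ {x | M < ‖x‖} (measurableSet_lt measurable_const measurable_norm)
  have hXthick := hXn ϑ (cthickening η (frontier B)) isClosed_cthickening.measurableSet
  have hperturb := abs_measureReal_smul_add_preimage_sub_le (P ϑ n) (X ϑ n) (Y ϑ n) (Z ϑ n) B hδM
  simp only [measureReal_def] at htail hthick hperturb
  have htriangle := abs_sub_le (P ϑ n ((fun ω => Z ϑ n ω • X ϑ n ω + Y ϑ n ω) ⁻¹' B)).toReal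
    (P ϑ n (X ϑ n ⁻¹' B)).toReal (P₀ (X₀ ⁻¹' B)).toReal
  rw [abs_sub_le_iff] at hXtail hXthick
  linarith [hXn ϑ B hB, hYn ϑ, hZn ϑ]

theorem uniform_slutsky {θ : Type*} {d : ℕ}
    (Ω : θ → ℕ → Type*) [∀ ϑ n, MeasurableSpace (Ω ϑ n)]
    (P : ∀ ϑ n, Measure (Ω ϑ n)) [∀ ϑ n, IsProbabilityMeasure (P ϑ n)]
    (Ω₀ : Type*) [MeasurableSpace Ω₀] (P₀ : Measure Ω₀) [IsProbabilityMeasure P₀]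
    (X : ∀ ϑ n, Ω ϑ n → EuclideanSpace ℝ (Fin d))
    (Y : ∀ ϑ n, Ω ϑ n → EuclideanSpace ℝ (Fin d))
    (Z : ∀ ϑ n, Ω ϑ n → ℝ)
    (X₀ : Ω₀ → EuclideanSpace ℝ (Fin d))
    (hX : ∀ ϑ n, Measurable (X ϑ n)) (hY : ∀ ϑ n, Measurable (Y ϑ n))
    (hZ : ∀ ϑ n, Measurable (Z ϑ n)) (hX₀ : Measurable X₀)
    -- (i) uniform convergence in total variation
    (hTV : ∀ ε > (0:ℝ), ∀ᶠ n in atTop, ∀ ϑ, ∀ B : Set (EuclideanSpace ℝ (Fin d)),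
      MeasurableSet B →
        |(P ϑ n (X ϑ n ⁻¹' B)).toReal - (P₀ (X₀ ⁻¹' B)).toReal| ≤ ε)
    -- (ii) Y converges to 0 uniformly in probability
    (hYconv : ∀ δ > (0:ℝ), ∀ ε > (0:ℝ), ∀ᶠ n in atTop, ∀ ϑ,
      (P ϑ n {ω | δ ≤ ‖Y ϑ n ω‖}).toReal ≤ ε)
    -- (iii) Z converges to 1 uniformly in probability
    (hZconv : ∀ δ > (0:ℝ), ∀ ε > (0:ℝ), ∀ᶠ n in atTop, ∀ ϑ,
      (P ϑ n {ω | δ ≤ |Z ϑ n ω - 1|}).toReal ≤ ε) :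
    ∀ B : Set (EuclideanSpace ℝ (Fin d)), MeasurableSet B →
      P₀ (X₀ ⁻¹' frontier B) = 0 →
      ∀ ε > (0:ℝ), ∀ᶠ n in atTop, ∀ ϑ,
        |(P ϑ n ((fun ω => Z ϑ n ω • X ϑ n ω + Y ϑ n ω) ⁻¹' B)).toReal
          - (P₀ (X₀ ⁻¹' B)).toReal| ≤ ε :=
  uniform_slutsky_general Ω P Ω₀ P₀ X Y Z X₀ hX₀ hTV hYconv hZconv
end

section
/- Let δ ∈ L²(ℝ) and suppose there exists p > 1 with ∫_ℝ (1+|x|)^p δ(x)² dx < ∞. Then the complex Gaussian process X(u) = ∫_ℝ e^{iux} δ(x) dW(x), u ∈ ℝ, where W is a two-sided Brownian motion, satisfies: there exists c > 0 such that E[|X(u) − X(v)|²]^{1/2} ≤ c |u − v|^α for all u, v ∈ ℝ, with α = min(p/2, 1) ∈ (1/2, 1]. -/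
/-!
Since `|sin t| ≤ min (|t|, 1) ≤ |t| ^ α` for `0 ≤ α ≤ 1`, the integrand satisfies
`4 sin² ((u - v) x / 2) δ(x)² ≤ 4 |u - v| ^ (2α) (1 + |x|) ^ (2α) δ(x)²`,
and `2α ≤ p` lets the moment assumption bound its integral by
`4 |u - v| ^ (2α) ∫ (1 + |x|) ^ p δ²`.
-/

open MeasureTheory Real

theorem Real.abs_sin_le_abs_rpow {α : ℝ} (h0 : 0 ≤ α) (h1 : α ≤ 1) (t : ℝ) :
    |sin t| ≤ |t| ^ α := by
  rcases le_total |t| 1 with ht | ht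
  · calc |sin t| ≤ |t| := abs_sin_le_abs
      _ = |t| ^ (1 : ℝ) := (rpow_one _).symm
      _ ≤ |t| ^ α := rpow_le_rpow_of_exponent_ge' (abs_nonneg t) ht h0 h1
  · exact (abs_sin_le_one t).trans (one_le_rpow ht h0)

theorem sin_sq_mul_div_two_le {α p : ℝ} (h0 : 0 ≤ α) (h1 : α ≤ 1) (hp : 2 * α ≤ p)
    (θ x : ℝ) :
    sin (θ * x / 2) ^ 2 ≤ (|θ| ^ α) ^ 2 * (1 + |x|) ^ p := by
  have hx : 1 ≤ 1 + |x| := le_add_of_nonneg_right (abs_nonneg x)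
  have habs : |θ * x / 2| ≤ |θ| * (1 + |x|) := by
    rw [abs_div, abs_mul, abs_two]
    nlinarith [abs_nonneg θ, abs_nonneg x]
  have hsin : |sin (θ * x / 2)| ≤ |θ| ^ α * (1 + |x|) ^ α :=
    calc |sin (θ * x / 2)| ≤ |θ * x / 2| ^ α := abs_sin_le_abs_rpow h0 h1 _
      _ ≤ (|θ| * (1 + |x|)) ^ α := rpow_le_rpow (abs_nonneg _) habs h0
      _ = |θ| ^ α * (1 + |x|) ^ α := mul_rpow (abs_nonneg θ) (by linarith)
  calc sin (θ * x / 2) ^ 2 = |sin (θ * x / 2)| ^ 2 := (sq_abs _).symm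
    _ ≤ (|θ| ^ α * (1 + |x|) ^ α) ^ 2 := pow_le_pow_left₀ (abs_nonneg _) hsin 2
    _ = (|θ| ^ α) ^ 2 * (1 + |x|) ^ (α * 2) := by
      rw [mul_pow, ← rpow_mul_natCast (x := 1 + |x|) (by linarith) α 2, Nat.cast_ofNat]
    _ ≤ (|θ| ^ α) ^ 2 * (1 + |x|) ^ p := by gcongr; linarith

theorem integral_four_mul_sin_sq_mul_sq_le {μ : Measure ℝ} {δ : ℝ → ℝ} {α p : ℝ}
    (hmom : Integrable (fun x => (1 + |x|) ^ p * δ x ^ 2) μ)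
    (h0 : 0 ≤ α) (h1 : α ≤ 1) (hp : 2 * α ≤ p) (θ : ℝ) :
    ∫ x, 4 * sin (θ * x / 2) ^ 2 * δ x ^ 2 ∂μ ≤
      (2 * |θ| ^ α) ^ 2 * ∫ x, (1 + |x|) ^ p * δ x ^ 2 ∂μ := by
  rw [← integral_const_mul]
  refine integral_mono_of_nonneg (.of_forall fun x => by positivity) (hmom.const_mul _)
    (.of_forall fun x => ?_)
  calc 4 * sin (θ * x / 2) ^ 2 * δ x ^ 2
      ≤ 4 * ((|θ| ^ α) ^ 2 * (1 + |x|) ^ p) * δ x ^ 2 := by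
        gcongr; exact sin_sq_mul_div_two_le h0 h1 hp θ x
    _ = (2 * |θ| ^ α) ^ 2 * ((1 + |x|) ^ p * δ x ^ 2) := by ring

theorem gaussian_process_increment_bound_general
    (δ : ℝ → ℝ) (p : ℝ) (hp : 1 < p)
    (hmom : Integrable (fun x => (1 + |x|) ^ p * δ x ^ 2))
    (α : ℝ) (hα : α = min (p / 2) 1) :
    α ∈ Set.Ioc (1/2 : ℝ) 1 ∧
    ∃ c > (0:ℝ), ∀ u v : ℝ,
      Real.sqrt (∫ x, 4 * Real.sin ((u - v) * x / 2) ^ 2 * δ x ^ 2) ≤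
        c * |u - v| ^ α := by
  have hαmem : α ∈ Set.Ioc (1/2 : ℝ) 1 :=
    hα ▸ ⟨lt_min (by linarith) (by norm_num), min_le_right _ _⟩
  have hαp : 2 * α ≤ p := by linarith [hα ▸ min_le_left (p / 2) 1]
  refine ⟨hαmem, ?_⟩
  set K := ∫ x, (1 + |x|) ^ p * δ x ^ 2
  refine ⟨2 * (√K + 1), by positivity, fun u v => ?_⟩
  calc √(∫ x, 4 * sin ((u - v) * x / 2) ^ 2 * δ x ^ 2)
      ≤ √((2 * |u - v| ^ α) ^ 2 * K) := sqrt_le_sqrt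
        (integral_four_mul_sin_sq_mul_sq_le hmom (by linarith [hαmem.1]) hαmem.2 hαp _)
    _ = 2 * |u - v| ^ α * √K := by rw [sqrt_mul (sq_nonneg _), sqrt_sq (by positivity)]
    _ ≤ 2 * |u - v| ^ α * (√K + 1) := by gcongr; linarith
    _ = 2 * (√K + 1) * |u - v| ^ α := by ring

theorem gaussian_process_increment_bound
    (δ : ℝ → ℝ) (hδ : MemLp δ 2 volume) (p : ℝ) (hp : 1 < p)
    (hmom : Integrable (fun x => (1 + |x|) ^ p * δ x ^ 2))
    (α : ℝ) (hα : α = min (p / 2) 1) :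
    α ∈ Set.Ioc (1/2 : ℝ) 1 ∧
    ∃ c > (0:ℝ), ∀ u v : ℝ,
      Real.sqrt (∫ x, 4 * Real.sin ((u - v) * x / 2) ^ 2 * δ x ^ 2) ≤
        c * |u - v| ^ α :=
  gaussian_process_increment_bound_general δ p hp hmom α hα
end
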